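/- arXiv:2509.18702 — 2 statements merged into one kernel-verified Lean document; each statement's English description precedes it below -/
import Mathlib

section
/- S_{G,E} is an inverse semigroup with zero: the multiplication is well defined (the two defining cases agree when both apply) and associative; every s ∈ S_{G,E} satisfies s s* s = s and s* s s* = s*; and any two idempotents of S_{G,E} commute. -/
/-- Finite paths in a directed graph: `Pth.nil x` is the length-zero path at the
vertex `x`, and `Pth.cons e p` is the path whose first edge is `e`, followed by `p`. -/
inductive Pth (V : Type) (Ed : Type) : Type where
  | nil : V → Pth V Ed
  | cons : Ed → Pth V Ed → Pth V Ed

/-- A self-similar graph `(G, E, φ)`: a group `G` acting on a directed graph `E`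
(with vertex set `V`, edge set `Ed`, range `r` and source `d`) by graph
automorphisms, together with a one-cocycle `φ : G × E¹ → G` for the action on
edges, satisfying `φ(g,e)·x = g·x` for all vertices `x`. -/
structure SelfSimGraph (G V Ed : Type) [Group G] : Type where
  r : Ed → V
  d : Ed → V
  actV : G → V → V
  actE : G → Ed → Ed
  actV_one : ∀ x, actV 1 x = x
  actV_mul : ∀ g h x, actV (g * h) x = actV g (actV h x)
  actE_one : ∀ e, actE 1 e = e
  actE_mul : ∀ g h e, actE (g * h) e = actE g (actE h e)
  r_act : ∀ g e, r (actE g e) = actV g (r e)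
  d_act : ∀ g e, d (actE g e) = actV g (d e)
  phi : G → Ed → G
  phi_cocycle : ∀ g h e, phi (g * h) e = phi g (actE h e) * phi h e
  phi_vertex : ∀ g e x, actV (phi g e) x = actV g x

variable {G V Ed : Type} [Group G]

/-- The range `r(α)` of a finite path. -/
def rngP (S : SelfSimGraph G V Ed) : Pth V Ed → V
  | Pth.nil x => x
  | Pth.cons e _ => S.r e

/-- The source `d(α)` of a finite path. -/
def srcP (S : SelfSimGraph G V Ed) : Pth V Ed → V
  | Pth.nil x => x
  | Pth.cons _ p => srcP S p

/-- Well-formedness of a finite path: consecutive edges match, `d(αᵢ) = r(αᵢ₊₁)`. -/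
def WFP (S : SelfSimGraph G V Ed) : Pth V Ed → Prop
  | Pth.nil _ => True
  | Pth.cons e p => S.d e = rngP S p ∧ WFP S p

/-- The length of a finite path. -/
def lenP : Pth V Ed → ℕ
  | Pth.nil _ => 0
  | Pth.cons _ p => lenP p + 1

/-- Concatenation `αβ` of finite paths (meaningful when `d(α) = r(β)`). -/
def compP : Pth V Ed → Pth V Ed → Pth V Ed
  | Pth.nil _, q => q
  | Pth.cons e p, q => Pth.cons e (compP p q)

/-- The action of `G` extended to finite paths:
`g·x = g·x` on vertices and `g·(eα) = (g·e)(φ(g,e)·α)`. -/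
def actP (S : SelfSimGraph G V Ed) : G → Pth V Ed → Pth V Ed
  | g, Pth.nil x => Pth.nil (S.actV g x)
  | g, Pth.cons e p => Pth.cons (S.actE g e) (actP S (S.phi g e) p)

/-- The cocycle extended to finite paths:
`φ(g,x) = g` on vertices and `φ(g, eα) = φ(φ(g,e), α)`. -/
def phiP (S : SelfSimGraph G V Ed) : G → Pth V Ed → G
  | g, Pth.nil _ => g
  | g, Pth.cons e p => phiP S (S.phi g e) p

/-- A path `τ` is strongly fixed by `g` if `g·τ = τ` and `φ(g,τ) = 1`. -/
def StronglyFixed (S : SelfSimGraph G V Ed) (g : G) (τ : Pth V Ed) : Prop :=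
  WFP S τ ∧ actP S g τ = τ ∧ phiP S g τ = 1

/-- `(G,E,φ)` is pseudo free if `g·e = e` and `φ(g,e) = 1` imply `g = 1`. -/
def PseudoFree (S : SelfSimGraph G V Ed) : Prop :=
  ∀ (g : G) (e : Ed), S.actE g e = e → S.phi g e = 1 → g = 1

/-- `p` is a prefix (initial segment) of `q`: `q = pε` for some path `ε`. -/
def IsPrefixP (S : SelfSimGraph G V Ed) (p q : Pth V Ed) : Prop :=
  ∃ ε, WFP S ε ∧ rngP S ε = srcP S p ∧ compP p ε = q

/-- The set `M_g` of minimal strongly fixed paths for `g`: strongly fixed paths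
none of whose proper prefixes is strongly fixed. -/
def MinSF (S : SelfSimGraph G V Ed) (g : G) : Set (Pth V Ed) :=
  {μ | StronglyFixed S g μ ∧ ∀ p, IsPrefixP S p μ → p ≠ μ → ¬StronglyFixed S g p}

/-- Well-formedness of an infinite path, viewed as a sequence of edges:
`d(ξᵢ) = r(ξᵢ₊₁)`. -/
def InfWF (S : SelfSimGraph G V Ed) (ξ : ℕ → Ed) : Prop :=
  ∀ i, S.d (ξ i) = S.r (ξ (i + 1))

/-- The range `r(ξ)` of an infinite path. -/
def rngInf (S : SelfSimGraph G V Ed) (ξ : ℕ → Ed) : V := S.r (ξ 0)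

/-- `takeP S ξ n` is the finite path `ξ|ₙ = ξ₁⋯ξₙ` (with `ξ|₀ = r(ξ₁)`). -/
def takeP (S : SelfSimGraph G V Ed) : (ℕ → Ed) → ℕ → Pth V Ed
  | ξ, 0 => Pth.nil (S.r (ξ 0))
  | ξ, n + 1 => Pth.cons (ξ 0) (takeP S (fun i => ξ (i + 1)) n)

/-- Membership of an infinite path in the cylinder `Z(α)`:
the initial segment of `ξ` of length `|α|` equals `α`. -/
def InZ (S : SelfSimGraph G V Ed) (α : Pth V Ed) (ξ : ℕ → Ed) : Prop :=
  takeP S ξ (lenP α) = α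

/-- The infinite path `αξ` obtained by prepending a finite path to an infinite one. -/
def prepSeq : Pth V Ed → (ℕ → Ed) → ℕ → Ed
  | Pth.nil _, ξ, n => ξ n
  | Pth.cons e _, _, 0 => e
  | Pth.cons _ p, ξ, n + 1 => prepSeq p ξ n

/-- Dropping the first `k` edges of an infinite path. -/
def dropSeq (k : ℕ) (ξ : ℕ → Ed) : ℕ → Ed := fun n => ξ (n + k)

/-- The space `E^∞` of infinite paths. -/
def InfPath (S : SelfSimGraph G V Ed) : Type := {ξ : ℕ → Ed // InfWF S ξ}

/-- The topology of `E^∞`: the subspace topology induced from the product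
topology on `(E¹)^ℕ`, `E¹` being discrete.  Its basis consists of the
cylinders `Z(α)`. -/
def infTop (S : SelfSimGraph G V Ed) : TopologicalSpace (InfPath S) :=
  TopologicalSpace.induced (fun ξ => ξ.1)
    (@Pi.topologicalSpace ℕ (fun _ => Ed) (fun _ => ⊥))

/-- Specification of the (unique) action of `G` on `E^∞`: `(g·ξ)|ₙ = g·(ξ|ₙ)`. -/
def ActSpec (S : SelfSimGraph G V Ed) (act : G → (ℕ → Ed) → ℕ → Ed) : Prop :=
  ∀ (g : G) (ξ : ℕ → Ed) (n : ℕ), takeP S (act g ξ) n = actP S g (takeP S ξ n)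

/-- The action of a triple `s = (α, g, β) ∈ S_{G,E}` on `E^∞`: it sends
`βξ ∈ Z(β)` to `α(g·ξ)`. -/
def sActSeq (S : SelfSimGraph G V Ed) (act : G → (ℕ → Ed) → ℕ → Ed)
    (α : Pth V Ed) (g : G) (β : Pth V Ed) (ξ : ℕ → Ed) : ℕ → Ed :=
  prepSeq α (act g (dropSeq (lenP β) ξ))

/-- The set of fixed points in `E^∞` of the element `s = (α, g, β)` of `S_{G,E}`. -/
def FixSet (S : SelfSimGraph G V Ed) (act : G → (ℕ → Ed) → ℕ → Ed)
    (α : Pth V Ed) (g : G) (β : Pth V Ed) : Set (InfPath S) :=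
  {η | InZ S β η.1 ∧ sActSeq S act α g β η.1 = η.1}

/-- A vertex `x` is simple if `r⁻¹(x)` is a singleton. -/
def SimpleVtx (S : SelfSimGraph G V Ed) (x : V) : Prop := ∃! e : Ed, S.r e = x

/-- A path `γ = γ₁⋯γₙ` has no entry if `d(γᵢ)` is simple for every `i`. -/
def NoEntry (S : SelfSimGraph G V Ed) : Pth V Ed → Prop
  | Pth.nil _ => True
  | Pth.cons e p => SimpleVtx S (S.d e) ∧ NoEntry S p

/-- A circuit: a path `γ` of nonzero length with `d(γ) = r(γ)`. -/
def Circuit (S : SelfSimGraph G V Ed) (γ : Pth V Ed) : Prop :=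
  WFP S γ ∧ 1 ≤ lenP γ ∧ srcP S γ = rngP S γ

/-- A `G`-circuit: a pair `(g,γ)` with `γ` of nonzero length and `d(γ) = g·r(γ)`. -/
def GCircuit (S : SelfSimGraph G V Ed) (g : G) (γ : Pth V Ed) : Prop :=
  WFP S γ ∧ 1 ≤ lenP γ ∧ srcP S γ = S.actV g (rngP S γ)

/-- `g` is slack at `x` if all sufficiently long paths with range `x` are
strongly fixed by `g`. -/
def SlackAt (S : SelfSimGraph G V Ed) (g : G) (x : V) : Prop :=
  ∃ n : ℕ, ∀ γ, WFP S γ → rngP S γ = x → n ≤ lenP γ → StronglyFixed S g γ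

/-- The sequence `(γⁿ, gₙ)` attached to a `G`-circuit `(g, γ)`:
`γ¹ = γ`, `g₁ = g`, `γⁿ⁺¹ = gₙ·γⁿ`, `gₙ₊₁ = φ(gₙ, γⁿ)` (indexed from `0`). -/
def circIter (S : SelfSimGraph G V Ed) (g : G) (γ : Pth V Ed) : ℕ → Pth V Ed × G
  | 0 => (γ, g)
  | n + 1 =>
      (actP S (circIter S g γ n).2 (circIter S g γ n).1,
       phiP S (circIter S g γ n).2 (circIter S g γ n).1)

/-- The finite concatenation `γ¹γ²⋯γⁿ`. -/
def circConcat (S : SelfSimGraph G V Ed) (g : G) (γ : Pth V Ed) : ℕ → Pth V Ed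
  | 0 => Pth.nil (rngP S γ)
  | n + 1 => compP (circConcat S g γ n) (circIter S g γ n).1

/-- `ξ` is the infinite concatenation `ξ(g,γ) = γ¹γ²γ³⋯`: it is an infinite path
whose initial segments are the finite concatenations `γ¹⋯γⁿ`. -/
def IsCircPath (S : SelfSimGraph G V Ed) (g : G) (γ : Pth V Ed) (ξ : ℕ → Ed) : Prop :=
  InfWF S ξ ∧ ∀ n, takeP S ξ (lenP (circConcat S g γ n)) = circConcat S g γ n

/-- `x ⇀ y`: there is a finite path with source `x` and range `y`. -/
def RelPath (S : SelfSimGraph G V Ed) (x y : V) : Prop :=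
  ∃ α, WFP S α ∧ srcP S α = x ∧ rngP S α = y

/-- `x ∼ y`: `x` and `y` are in the same `G`-orbit. -/
def RelOrb (S : SelfSimGraph G V Ed) (x y : V) : Prop :=
  ∃ g : G, S.actV g x = y

/-- `x ≫ y`: there is a vertex `u` with `x ⇀ u ∼ y`. -/
def RelGG (S : SelfSimGraph G V Ed) (x y : V) : Prop :=
  ∃ u, RelPath S x u ∧ RelOrb S u y

/-- A nonzero element `(α, g, β)` of `S_{G,E}`: `α, β ∈ E*`, `g ∈ G`, with
`d(α) = g·d(β)`. -/
def SGETriple (S : SelfSimGraph G V Ed) : Type :=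
  {t : Pth V Ed × G × Pth V Ed //
    WFP S t.1 ∧ WFP S t.2.2 ∧ srcP S t.1 = S.actV t.2.1 (srcP S t.2.2)}

/-- The inverse semigroup `S_{G,E}` (as a set): the triples together with `0 = none`. -/
def SGE (S : SelfSimGraph G V Ed) : Type := Option (SGETriple S)

/-- Forget the membership proofs. -/
def sgeToRaw (S : SelfSimGraph G V Ed) : SGE S → Option (Pth V Ed × G × Pth V Ed) :=
  Option.map Subtype.val

/-- The adjoint: `(α, g, β)* = (β, g⁻¹, α)`, `0* = 0`. -/
def starSGE (S : SelfSimGraph G V Ed) : SGE S → SGE S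
  | none => none
  | some s =>
      some ⟨(s.1.2.2, s.1.2.1⁻¹, s.1.1),
        ⟨s.2.2.1, s.2.1, by
          rw [s.2.2.2, ← S.actV_mul, inv_mul_cancel, S.actV_one]⟩⟩

/-- The idempotent `f_α = (α, 1, α)`. -/
def fIdem (S : SelfSimGraph G V Ed) (α : Pth V Ed) (h : WFP S α) : SGE S :=
  some ⟨(α, 1, α), ⟨h, h, by rw [S.actV_one]⟩⟩

/-- Specification of the multiplication of `S_{G,E}`:
`0` is absorbing; `(α,g,β)(γ,h,δ) = (α(g·ε), φ(g,ε)h, δ)` if `γ = βε`;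
`(α,g,β)(γ,h,δ) = (α, gφ(h⁻¹,ε)⁻¹, δ(h⁻¹·ε))` if `β = γε`; `0` otherwise. -/
def MulSpec (S : SelfSimGraph G V Ed) (mul : SGE S → SGE S → SGE S) : Prop :=
  (∀ t, mul none t = none) ∧
  (∀ s, mul s none = none) ∧
  (∀ (s t : SGETriple S) (ε : Pth V Ed),
     WFP S ε → rngP S ε = srcP S s.1.2.2 → t.1.1 = compP s.1.2.2 ε →
       sgeToRaw S (mul (some s) (some t)) =
         some (compP s.1.1 (actP S s.1.2.1 ε), phiP S s.1.2.1 ε * t.1.2.1, t.1.2.2)) ∧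
  (∀ (s t : SGETriple S) (ε : Pth V Ed),
     WFP S ε → rngP S ε = srcP S t.1.1 → s.1.2.2 = compP t.1.1 ε →
       sgeToRaw S (mul (some s) (some t)) =
         some (s.1.1, s.1.2.1 * (phiP S t.1.2.1⁻¹ ε)⁻¹,
               compP t.1.2.2 (actP S t.1.2.1⁻¹ ε))) ∧
  (∀ (s t : SGETriple S),
     (¬∃ ε, WFP S ε ∧ rngP S ε = srcP S s.1.2.2 ∧ t.1.1 = compP s.1.2.2 ε) →
     (¬∃ ε, WFP S ε ∧ rngP S ε = srcP S t.1.1 ∧ s.1.2.2 = compP t.1.1 ε) →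
       mul (some s) (some t) = none)

/-- Topological freeness of the standard action of `S_{G,E}` on `E^∞`: for every
nonzero `s = (α, g, β)`, every interior fixed point `ζ` of `s` satisfies `α = β`
and `ζ ∈ Z(ατ)` for some `τ` strongly fixed by `g`. -/
def TopFree (S : SelfSimGraph G V Ed) (act : G → (ℕ → Ed) → ℕ → Ed) : Prop :=
  ∀ (α : Pth V Ed) (g : G) (β : Pth V Ed),
    WFP S α → WFP S β → srcP S α = S.actV g (srcP S β) →
    ∀ ζ : InfPath S, ζ ∈ @interior (InfPath S) (infTop S) (FixSet S act α g β) →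
      α = β ∧ ∃ τ : Pth V Ed, WFP S τ ∧ rngP S τ = srcP S α ∧
        StronglyFixed S g τ ∧ InZ S (compP α τ) ζ.1

/-! `S_{G,E}` acts faithfully on `E* × G` by partial maps: `(α, g, β)` sends `(βε, k)` to
`(α(g·ε), φ(g,ε)k)`.  The case rules of the multiplication say exactly that this action turns
products into composites (the second rule being the adjoint of the first), so associativity
is inherited from composition of partial maps.  The partial map of `s*` is the inverse of that
of `s`, which gives `s s* s = s`, and an idempotent `(α, g, β)` must be some `f_β`, acting as a
partial identity; partial identities commute. -/

section Paths

variable {S : SelfSimGraph G V Ed}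

theorem lenP_compP (p q : Pth V Ed) : lenP (compP p q) = lenP p + lenP q := by
  induction p with
  | nil _ => exact (Nat.zero_add _).symm
  | cons _ _ ih => simp only [compP, lenP, ih]; omega

theorem srcP_compP (p q : Pth V Ed) : srcP S (compP p q) = srcP S q := by
  induction p with
  | nil _ => rfl
  | cons _ _ ih => exact ih

theorem rngP_compP {p q : Pth V Ed} (h : rngP S q = srcP S p) :
    rngP S (compP p q) = rngP S p := by
  cases p with
  | nil _ => exact h
  | cons _ _ => rfl

theorem compP_nil_srcP (p : Pth V Ed) : compP p (Pth.nil (srcP S p)) = p := by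
  induction p with
  | nil _ => rfl
  | cons e _ ih => exact congrArg (Pth.cons e) ih

theorem compP_assoc (p q r : Pth V Ed) : compP (compP p q) r = compP p (compP q r) := by
  induction p with
  | nil _ => rfl
  | cons e _ ih => exact congrArg (Pth.cons e) ih

theorem compP_cancel_left {p q r : Pth V Ed} (h : compP p q = compP p r) : q = r := by
  induction p with
  | nil _ => exact h
  | cons _ _ ih => exact ih (Pth.cons.inj h).2

theorem WFP.compP {p q : Pth V Ed} (hp : WFP S p) (hq : WFP S q) (h : rngP S q = srcP S p) :
    WFP S (compP p q) := by
  induction p with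
  | nil _ => exact hq
  | cons _ p ih => exact ⟨hp.1.trans (rngP_compP (p := p) h).symm, ih hp.2 h⟩

theorem eq_nil_of_lenP_eq_zero {p : Pth V Ed} (h : lenP p = 0) : p = Pth.nil (rngP S p) := by
  cases p with
  | nil _ => rfl
  | cons _ _ => exact absurd h (Nat.succ_ne_zero _)

theorem eq_nil_of_compP_eq_self {p q : Pth V Ed} (h : compP p q = p) (hq : rngP S q = srcP S p) :
    q = Pth.nil (srcP S p) := by
  have hlen : lenP q = 0 := by
    have := congrArg lenP h
    rw [lenP_compP] at this
    omega
  rw [eq_nil_of_lenP_eq_zero (S := S) hlen, hq]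

theorem isPrefixP_iff_exists {p q : Pth V Ed} :
    IsPrefixP S p q ↔ ∃ ε, WFP S ε ∧ rngP S ε = srcP S p ∧ q = compP p ε :=
  exists_congr fun _ => and_congr_right' (and_congr_right' eq_comm)

theorem IsPrefixP.choose_eq {p q ε : Pth V Ed} (h : IsPrefixP S p q) (hε : compP p ε = q) :
    h.choose = ε :=
  compP_cancel_left (h.choose_spec.2.2.trans hε.symm)

theorem IsPrefixP.antisymm {p q : Pth V Ed} (hpq : IsPrefixP S p q) (hqp : IsPrefixP S q p) :
    p = q := by
  obtain ⟨ε, -, hr, rfl⟩ := hpq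
  obtain ⟨ε', -, -, h⟩ := hqp
  rw [compP_assoc] at h
  have hlen : lenP ε = 0 := by
    have := congrArg lenP h
    rw [lenP_compP, lenP_compP] at this
    omega
  rw [eq_nil_of_lenP_eq_zero (S := S) hlen, hr, compP_nil_srcP]

theorem IsPrefixP.cons {p q : Pth V Ed} (h : IsPrefixP S p q) (e : Ed) :
    IsPrefixP S (Pth.cons e p) (Pth.cons e q) :=
  let ⟨ε, hw, hr, hc⟩ := h
  ⟨ε, hw, hr, congrArg (Pth.cons e) hc⟩

theorem IsPrefixP.nil_of_isPrefixP {x : V} {q r : Pth V Ed} (hx : IsPrefixP S (Pth.nil x) r)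
    (hq : WFP S q) (hqr : IsPrefixP S q r) : IsPrefixP S (Pth.nil x) q := by
  obtain ⟨ε, -, hε, rfl⟩ := hx
  obtain ⟨ε', -, hε', rfl⟩ := hqr
  exact ⟨q, hq, (rngP_compP hε').symm.trans hε, rfl⟩

theorem IsPrefixP.total {p q r : Pth V Ed} (hpr : IsPrefixP S p r) (hqr : IsPrefixP S q r)
    (hp : WFP S p) (hq : WFP S q) : IsPrefixP S p q ∨ IsPrefixP S q p := by
  induction p generalizing q r with
  | nil _ => exact Or.inl (hpr.nil_of_isPrefixP hq hqr)
  | cons e p ih =>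
    cases q with
    | nil _ => exact Or.inr (hqr.nil_of_isPrefixP hp hpr)
    | cons e' q =>
      obtain ⟨ε, hw, hr, rfl⟩ := hpr
      obtain ⟨ε', hw', hr', h⟩ := hqr
      obtain ⟨he, htail⟩ : e' = e ∧ compP q ε' = compP p ε := Pth.cons.inj h
      subst he
      exact (ih (q := q) ⟨ε, hw, hr, rfl⟩ ⟨ε', hw', hr', htail⟩ hp.2 hq.2).imp
        (·.cons e') (·.cons e')

end Paths

section Action

variable {S : SelfSimGraph G V Ed}

theorem phi_one (e : Ed) : S.phi 1 e = 1 := by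
  have h := S.phi_cocycle 1 1 e
  rw [one_mul, S.actE_one] at h
  exact left_eq_mul.mp h

theorem actP_one (p : Pth V Ed) : actP S 1 p = p := by
  induction p with
  | nil x => exact congrArg Pth.nil (S.actV_one x)
  | cons e p ih =>
    change Pth.cons (S.actE 1 e) (actP S (S.phi 1 e) p) = _
    rw [S.actE_one, phi_one, ih]

theorem phiP_one (p : Pth V Ed) : phiP S 1 p = 1 := by
  induction p with
  | nil _ => rfl
  | cons e p ih =>
    change phiP S (S.phi 1 e) p = 1
    rw [phi_one, ih]

theorem actP_mul (g h : G) (p : Pth V Ed) : actP S (g * h) p = actP S g (actP S h p) := by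
  induction p generalizing g h with
  | nil x => exact congrArg Pth.nil (S.actV_mul g h x)
  | cons e p ih =>
    change Pth.cons (S.actE (g * h) e) (actP S (S.phi (g * h) e) p) = Pth.cons
      (S.actE g (S.actE h e)) (actP S (S.phi g (S.actE h e)) (actP S (S.phi h e) p))
    rw [S.actE_mul, S.phi_cocycle, ih]

theorem phiP_mul (g h : G) (p : Pth V Ed) :
    phiP S (g * h) p = phiP S g (actP S h p) * phiP S h p := by
  induction p generalizing g h with
  | nil _ => rfl
  | cons e p ih =>
    change phiP S (S.phi (g * h) e) p =
      phiP S (S.phi g (S.actE h e)) (actP S (S.phi h e) p) * phiP S (S.phi h e) p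
    rw [S.phi_cocycle, ih]

theorem actV_phiP (g : G) (p : Pth V Ed) (x : V) : S.actV (phiP S g p) x = S.actV g x := by
  induction p generalizing g with
  | nil _ => rfl
  | cons e p ih => exact (ih _).trans (S.phi_vertex g e x)

theorem rngP_actP (g : G) (p : Pth V Ed) : rngP S (actP S g p) = S.actV g (rngP S p) := by
  cases p with
  | nil _ => rfl
  | cons e _ => exact S.r_act g e

theorem srcP_actP (g : G) (p : Pth V Ed) : srcP S (actP S g p) = S.actV g (srcP S p) := by
  induction p generalizing g with
  | nil _ => rfl
  | cons e p ih => exact (ih _).trans (S.phi_vertex g e _)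

theorem lenP_actP (g : G) (p : Pth V Ed) : lenP (actP S g p) = lenP p := by
  induction p generalizing g with
  | nil _ => rfl
  | cons _ _ ih => exact congrArg (· + 1) (ih _)

theorem WFP.actP {p : Pth V Ed} (hp : WFP S p) (g : G) : WFP S (_root_.actP S g p) := by
  induction p generalizing g with
  | nil _ => trivial
  | cons e p ih => exact ⟨by rw [S.d_act, hp.1, rngP_actP, S.phi_vertex], ih hp.2 _⟩

theorem actP_compP (g : G) (p q : Pth V Ed) :
    actP S g (compP p q) = compP (actP S g p) (actP S (phiP S g p) q) := by
  induction p generalizing g with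
  | nil _ => rfl
  | cons e _ ih => exact congrArg (Pth.cons (S.actE g e)) (ih _)

theorem phiP_compP (g : G) (p q : Pth V Ed) : phiP S g (compP p q) = phiP S (phiP S g p) q := by
  induction p generalizing g with
  | nil _ => rfl
  | cons _ _ ih => exact ih _

theorem actP_inv_actP (g : G) (p : Pth V Ed) : actP S g⁻¹ (actP S g p) = p := by
  rw [← actP_mul, inv_mul_cancel, actP_one]

theorem phiP_inv_actP (g : G) (p : Pth V Ed) : phiP S g⁻¹ (actP S g p) = (phiP S g p)⁻¹ := by
  have h := phiP_mul (S := S) g⁻¹ g p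
  rw [inv_mul_cancel, phiP_one] at h
  exact eq_inv_of_mul_eq_one_left h.symm

theorem srcP_eq_actV_inv {α β : Pth V Ed} {g : G} (hs : srcP S α = S.actV g (srcP S β)) :
    srcP S β = S.actV g⁻¹ (srcP S α) := by
  rw [hs, ← S.actV_mul, inv_mul_cancel, S.actV_one]

end Action

/-- `SGETriple S` is the subtype of triples satisfying `IsTriple`, so that
`s.2 : IsTriple S s.1.1 s.1.2.1 s.1.2.2`. -/
def IsTriple (S : SelfSimGraph G V Ed) (α : Pth V Ed) (g : G) (β : Pth V Ed) : Prop :=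
  WFP S α ∧ WFP S β ∧ srcP S α = S.actV g (srcP S β)

section Triples

variable {S : SelfSimGraph G V Ed} {α β γ δ ε : Pth V Ed} {g h : G}

theorem IsTriple.star (hs : IsTriple S α g β) : IsTriple S β g⁻¹ α :=
  ⟨hs.2.1, hs.1, srcP_eq_actV_inv hs.2.2⟩

theorem IsTriple.mul_of_compP_eq (hs : IsTriple S α g β) (ht : IsTriple S γ h δ)
    (hεw : WFP S ε) (hεr : rngP S ε = srcP S β) (hγ : compP β ε = γ) :
    IsTriple S (compP α (actP S g ε)) (phiP S g ε * h) δ := by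
  refine ⟨hs.1.compP (hεw.actP g) (by rw [rngP_actP, hεr, hs.2.2]), ht.2.1, ?_⟩
  rw [srcP_compP, srcP_actP, S.actV_mul, actV_phiP, ← ht.2.2, ← hγ, srcP_compP]

/-- The second case of the multiplication is the adjoint of the first: `st = (t* s*)*`. -/
theorem IsTriple.mul_of_eq_compP (hs : IsTriple S α g β) (ht : IsTriple S γ h δ)
    (hεw : WFP S ε) (hεr : rngP S ε = srcP S γ) (hβ : compP γ ε = β) :
    IsTriple S α (g * (phiP S h⁻¹ ε)⁻¹) (compP δ (actP S h⁻¹ ε)) := by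
  simpa only [mul_inv_rev, inv_inv] using (ht.star.mul_of_compP_eq hs.star hεw hεr hβ).star

variable (S) in
open Classical in
/-- `(βε, k) ↦ (α(g·ε), φ(g,ε)k)`, undefined unless `β` is a prefix of the path. -/
noncomputable def actTriple (α : Pth V Ed) (g : G) (β : Pth V Ed) (x : Pth V Ed × G) :
    Option (Pth V Ed × G) :=
  if h : IsPrefixP S β x.1 then some (compP α (actP S g h.choose), phiP S g h.choose * x.2)
  else none

theorem actTriple_compP (hw : WFP S ε) (hr : rngP S ε = srcP S β) (k : G) :
    actTriple S α g β (compP β ε, k) = some (compP α (actP S g ε), phiP S g ε * k) := by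
  have h : IsPrefixP S β (compP β ε) := ⟨ε, hw, hr, rfl⟩
  rw [actTriple, dif_pos h, h.choose_eq rfl]

theorem actTriple_of_not_isPrefixP {x : Pth V Ed × G} (h : ¬IsPrefixP S β x.1) :
    actTriple S α g β x = none :=
  dif_neg h

theorem isPrefixP_of_actTriple_eq_some {x y : Pth V Ed × G} (h : actTriple S α g β x = some y) :
    IsPrefixP S β x.1 := by
  by_contra hx
  rw [actTriple_of_not_isPrefixP hx] at h
  cases h

theorem actTriple_self (hs : srcP S α = S.actV g (srcP S β)) :
    actTriple S α g β (β, 1) = some (α, g) := by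
  have h := actTriple_compP (S := S) (α := α) (g := g) (ε := Pth.nil (srcP S β)) trivial rfl 1
  rwa [compP_nil_srcP, mul_one, show actP S g (Pth.nil (srcP S β)) = Pth.nil (srcP S α) by
    rw [hs]; rfl, compP_nil_srcP] at h

theorem actTriple_inv_of_eq_some {x y : Pth V Ed × G} (hs : srcP S α = S.actV g (srcP S β))
    (h : actTriple S α g β x = some y) : actTriple S β g⁻¹ α y = some x := by
  obtain ⟨θ, k⟩ := x
  obtain ⟨ε, hw, hr, rfl⟩ := isPrefixP_of_actTriple_eq_some h
  rw [actTriple_compP hw hr] at h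
  cases h
  rw [actTriple_compP (hw.actP g) (by rw [rngP_actP, hr, hs]), actP_inv_actP, phiP_inv_actP,
    inv_mul_cancel_left]

theorem actTriple_inv_eq_some_iff {x y : Pth V Ed × G} (hs : srcP S α = S.actV g (srcP S β)) :
    actTriple S β g⁻¹ α y = some x ↔ actTriple S α g β x = some y :=
  ⟨fun h => by simpa only [inv_inv] using actTriple_inv_of_eq_some (srcP_eq_actV_inv hs) h,
    actTriple_inv_of_eq_some hs⟩

theorem actTriple_bind_of_compP_eq (ht : srcP S γ = S.actV h (srcP S δ)) (hεw : WFP S ε)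
    (hεr : rngP S ε = srcP S β) (hγ : compP β ε = γ) (x : Pth V Ed × G) :
    (actTriple S γ h δ x).bind (actTriple S α g β) =
      actTriple S (compP α (actP S g ε)) (phiP S g ε * h) δ x := by
  subst hγ
  obtain ⟨θ, k⟩ := x
  by_cases hx : IsPrefixP S δ θ
  · obtain ⟨ε', hw', hr', rfl⟩ := hx
    have hr'' : rngP S (actP S h ε') = srcP S ε := by
      rw [rngP_actP, hr', ← ht, srcP_compP]
    rw [actTriple_compP hw' hr', actTriple_compP hw' hr', Option.bind_some, compP_assoc,
      actTriple_compP (hεw.compP (hw'.actP h) hr'') (by rw [rngP_compP hr'', hεr]),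
      actP_compP, ← actP_mul, compP_assoc, phiP_compP, phiP_mul, mul_assoc]
  · rw [actTriple_of_not_isPrefixP hx, actTriple_of_not_isPrefixP hx, Option.bind_none]

theorem actTriple_bind_of_eq_compP (hs : IsTriple S α g β) (ht : IsTriple S γ h δ)
    (hεw : WFP S ε) (hεr : rngP S ε = srcP S γ) (hβ : compP γ ε = β) (x : Pth V Ed × G) :
    (actTriple S γ h δ x).bind (actTriple S α g β) =
      actTriple S α (g * (phiP S h⁻¹ ε)⁻¹) (compP δ (actP S h⁻¹ ε)) x := by
  refine Option.ext fun y => ?_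
  have hdual := actTriple_bind_of_compP_eq (α := δ) (g := h⁻¹) (srcP_eq_actV_inv hs.2.2)
    hεw hεr hβ y
  rw [Option.bind_eq_some_iff,
    ← actTriple_inv_eq_some_iff (hs.mul_of_eq_compP ht hεw hεr hβ).2.2, mul_inv_rev, inv_inv,
    ← hdual, Option.bind_eq_some_iff]
  exact exists_congr fun z => by
    rw [actTriple_inv_eq_some_iff hs.2.2, actTriple_inv_eq_some_iff ht.2.2, and_comm]

theorem actTriple_bind_eq_none (hβ : WFP S β) (hγ : WFP S γ) (ht : srcP S γ = S.actV h (srcP S δ))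
    (h₁ : ¬IsPrefixP S β γ) (h₂ : ¬IsPrefixP S γ β) (x : Pth V Ed × G) :
    (actTriple S γ h δ x).bind (actTriple S α g β) = none := by
  obtain ⟨θ, k⟩ := x
  by_cases hx : IsPrefixP S δ θ
  · obtain ⟨ε', hw', hr', rfl⟩ := hx
    rw [actTriple_compP hw' hr', Option.bind_some]
    refine actTriple_of_not_isPrefixP fun hβγ => ?_
    have hγγ : IsPrefixP S γ (compP γ (actP S h ε')) :=
      ⟨_, hw'.actP h, by rw [rngP_actP, hr', ht], rfl⟩
    exact (hβγ.total hγγ hβ hγ).elim h₁ h₂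
  · rw [actTriple_of_not_isPrefixP hx, Option.bind_none]

theorem eq_and_eq_one_of_actTriple_self (h : actTriple S α g β (α, g) = some (α, g)) :
    α = β ∧ g = 1 := by
  obtain ⟨ε, hw, hr, hα⟩ := isPrefixP_of_actTriple_eq_some h
  change compP β ε = α at hα
  subst hα
  rw [actTriple_compP hw hr] at h
  obtain ⟨hpath, hgrp⟩ := Prod.mk.inj (Option.some.inj h)
  obtain rfl : ε = Pth.nil (srcP S β) := by
    have hlen := congrArg lenP hpath
    rw [lenP_compP, lenP_actP] at hlen
    rw [eq_nil_of_lenP_eq_zero (S := S) (p := ε) (by omega), hr]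
  exact ⟨compP_nil_srcP β, mul_eq_right.mp hgrp⟩

theorem actTriple_one_eq_some {x y : Pth V Ed × G} (h : actTriple S β 1 β x = some y) : y = x := by
  obtain ⟨θ, k⟩ := x
  obtain ⟨ε, hw, hr, rfl⟩ := isPrefixP_of_actTriple_eq_some h
  rw [actTriple_compP hw hr, actP_one, phiP_one, one_mul] at h
  exact (Option.some.inj h).symm

end Triples

theorem bind_comm_of_partialIds {X : Type*} {p q : X → Option X}
    (hp : ∀ x y, p x = some y → y = x) (hq : ∀ x y, q x = some y → y = x) (x : X) :
    (p x).bind q = (q x).bind p := by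
  rcases hpx : p x with _ | y <;> rcases hqx : q x with _ | z
  · rfl
  · obtain rfl := hq x z hqx
    exact hpx.symm
  · obtain rfl := hp x y hpx
    exact hqx
  · obtain rfl := hp x y hpx
    obtain rfl := hq _ z hqx
    exact hqx.trans hpx.symm

section Representation

variable (S : SelfSimGraph G V Ed)

noncomputable def actSGE : SGE S → Pth V Ed × G → Option (Pth V Ed × G)
  | none => fun _ => none
  | some s => actTriple S s.1.1 s.1.2.1 s.1.2.2

variable {S}

theorem actSGE_injective : Function.Injective (actSGE S) := by
  have hbase (s : SGETriple S) : actSGE S (some s) (s.1.2.2, 1) = some (s.1.1, s.1.2.1) :=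
    actTriple_self s.2.2.2
  rintro (_ | s) (_ | t) hab
  · rfl
  · exact absurd ((congrFun hab _).trans (hbase t)) (by simp [actSGE])
  · exact absurd ((congrFun hab _).symm.trans (hbase s)) (by simp [actSGE])
  · have h₁ := (congrFun hab (s.1.2.2, 1)).symm.trans (hbase s)
    have h₂ := (congrFun hab (t.1.2.2, 1)).trans (hbase t)
    have hβ := (isPrefixP_of_actTriple_eq_some h₂).antisymm (isPrefixP_of_actTriple_eq_some h₁)
    rw [hβ, hbase t] at h₁
    obtain ⟨hα, hg⟩ := Prod.mk.inj (Option.some.inj h₁)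
    exact congrArg some (Subtype.ext (Prod.ext hα.symm (Prod.ext hg.symm hβ)))

theorem actSGE_of_sgeToRaw_eq_some {a : SGE S} {α β : Pth V Ed} {g : G}
    (h : sgeToRaw S a = some (α, g, β)) : actSGE S a = actTriple S α g β := by
  rcases a with _ | ⟨r, _⟩
  · cases h
  · obtain rfl := Option.some.inj h
    rfl

theorem actSGE_starSGE_of_eq_some {a : SGE S} {x y : Pth V Ed × G} (h : actSGE S a x = some y) :
    actSGE S (starSGE S a) y = some x := by
  rcases a with _ | ⟨_, hs⟩
  · cases h
  · exact actTriple_inv_of_eq_some hs.2.2 h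

theorem starSGE_starSGE (a : SGE S) : starSGE S (starSGE S a) = a := by
  rcases a with _ | s
  · rfl
  · exact congrArg some (Subtype.ext (Prod.ext rfl (Prod.ext (inv_inv _) rfl)))

theorem actSGE_mul {mul : SGE S → SGE S → SGE S} (hmul : MulSpec S mul) (a b : SGE S) :
    actSGE S (mul a b) = fun x => (actSGE S b x).bind (actSGE S a) := by
  obtain ⟨hzero_left, hzero_right, hcase₁, hcase₂, hcase₃⟩ := hmul
  funext x
  rcases a with _ | s
  · rw [hzero_left]
    exact (Option.bind_fun_none _).symm
  rcases b with _ | t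
  · exact congrArg (actSGE S · x) (hzero_right _)
  by_cases h₁ : IsPrefixP S s.1.2.2 t.1.1
  · obtain ⟨ε, hw, hr, hc⟩ := h₁
    rw [actSGE_of_sgeToRaw_eq_some (hcase₁ s t ε hw hr hc.symm)]
    exact (actTriple_bind_of_compP_eq t.2.2.2 hw hr hc x).symm
  by_cases h₂ : IsPrefixP S t.1.1 s.1.2.2
  · obtain ⟨ε, hw, hr, hc⟩ := h₂
    rw [actSGE_of_sgeToRaw_eq_some (hcase₂ s t ε hw hr hc.symm)]
    exact (actTriple_bind_of_eq_compP s.2 t.2 hw hr hc x).symm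
  rw [hcase₃ s t (isPrefixP_iff_exists.not.mp h₁) (isPrefixP_iff_exists.not.mp h₂)]
  exact (actTriple_bind_eq_none s.2.2.1 t.2.1 t.2.2.2 h₁ h₂ x).symm

end Representation

section Multiplication

variable {S : SelfSimGraph G V Ed}

theorem mul_rules_agree {α β δ : Pth V Ed} {g h : G} (hs : srcP S α = S.actV g (srcP S β))
    (ht : srcP S β = S.actV h (srcP S δ)) :
    (compP α (actP S g (Pth.nil (srcP S β))), phiP S g (Pth.nil (srcP S β)) * h, δ) =
      (α, g * (phiP S h⁻¹ (Pth.nil (srcP S β)))⁻¹, compP δ (actP S h⁻¹ (Pth.nil (srcP S β)))) := by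
  change (compP α (Pth.nil (S.actV g (srcP S β))), g * h, δ) =
    (α, g * h⁻¹⁻¹, compP δ (Pth.nil (S.actV h⁻¹ (srcP S β))))
  rw [← hs, ← srcP_eq_actV_inv ht, compP_nil_srcP, compP_nil_srcP, inv_inv]

variable (S) in
open Classical in
noncomputable def mulDef : SGE S → SGE S → SGE S
  | none, _ => none
  | some _, none => none
  | some s, some t =>
    if h₁ : IsPrefixP S s.1.2.2 t.1.1 then
      some ⟨(compP s.1.1 (actP S s.1.2.1 h₁.choose), phiP S s.1.2.1 h₁.choose * t.1.2.1, t.1.2.2),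
        IsTriple.mul_of_compP_eq s.2 t.2 h₁.choose_spec.1 h₁.choose_spec.2.1 h₁.choose_spec.2.2⟩
    else if h₂ : IsPrefixP S t.1.1 s.1.2.2 then
      some ⟨(s.1.1, s.1.2.1 * (phiP S t.1.2.1⁻¹ h₂.choose)⁻¹,
          compP t.1.2.2 (actP S t.1.2.1⁻¹ h₂.choose)),
        IsTriple.mul_of_eq_compP s.2 t.2 h₂.choose_spec.1 h₂.choose_spec.2.1 h₂.choose_spec.2.2⟩
    else none

theorem sgeToRaw_mulDef_of_isPrefixP {s t : SGETriple S} (h₁ : IsPrefixP S s.1.2.2 t.1.1) :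
    sgeToRaw S (mulDef S (some s) (some t)) = some (compP s.1.1 (actP S s.1.2.1 h₁.choose),
      phiP S s.1.2.1 h₁.choose * t.1.2.1, t.1.2.2) :=
  congrArg (sgeToRaw S) (dif_pos h₁)

theorem sgeToRaw_mulDef_of_not_isPrefixP {s t : SGETriple S} (h₁ : ¬IsPrefixP S s.1.2.2 t.1.1)
    (h₂ : IsPrefixP S t.1.1 s.1.2.2) :
    sgeToRaw S (mulDef S (some s) (some t)) = some (s.1.1,
      s.1.2.1 * (phiP S t.1.2.1⁻¹ h₂.choose)⁻¹, compP t.1.2.2 (actP S t.1.2.1⁻¹ h₂.choose)) :=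
  congrArg (sgeToRaw S) ((dif_neg h₁ : mulDef S (some s) (some t) = _).trans (dif_pos h₂))

theorem mulDef_spec : MulSpec S (mulDef S) := by
  refine ⟨fun _ => rfl, fun s => by cases s <;> rfl, ?_, ?_, ?_⟩
  · intro s t ε hw hr hc
    have h₁ : IsPrefixP S s.1.2.2 t.1.1 := ⟨ε, hw, hr, hc.symm⟩
    rw [sgeToRaw_mulDef_of_isPrefixP h₁, h₁.choose_eq hc.symm]
  · intro s t ε hw hr hc
    have h₂ : IsPrefixP S t.1.1 s.1.2.2 := ⟨ε, hw, hr, hc.symm⟩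
    by_cases h₁ : IsPrefixP S s.1.2.2 t.1.1
    · have hβγ : s.1.2.2 = t.1.1 := h₁.antisymm h₂
      have hchoose : h₁.choose = Pth.nil (srcP S s.1.2.2) :=
        eq_nil_of_compP_eq_self (h₁.choose_spec.2.2.trans hβγ.symm) h₁.choose_spec.2.1
      have hε : ε = Pth.nil (srcP S s.1.2.2) := by
        rw [hβγ]
        exact eq_nil_of_compP_eq_self (hc.symm.trans hβγ) hr
      rw [sgeToRaw_mulDef_of_isPrefixP h₁, hchoose, hε, mul_rules_agree s.2.2.2 (hβγ ▸ t.2.2.2)]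
    · rw [sgeToRaw_mulDef_of_not_isPrefixP h₁ h₂, h₂.choose_eq hc.symm]
  · intro s t h₁ h₂
    exact (dif_neg (isPrefixP_iff_exists.not.mpr h₁)).trans
      (dif_neg (isPrefixP_iff_exists.not.mpr h₂))

end Multiplication

section InverseSemigroup

variable {S : SelfSimGraph G V Ed} {mul : SGE S → SGE S → SGE S}

theorem mul_assoc_of_mulSpec (hmul : MulSpec S mul) (a b c : SGE S) :
    mul (mul a b) c = mul a (mul b c) :=
  actSGE_injective <| by simp only [actSGE_mul hmul, Option.bind_assoc]

theorem mul_starSGE_mul_of_mulSpec (hmul : MulSpec S mul) (a : SGE S) :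
    mul (mul a (starSGE S a)) a = a := by
  refine actSGE_injective (funext fun x => ?_)
  simp only [actSGE_mul hmul]
  rcases hx : actSGE S a x with _ | y
  · rfl
  · rw [Option.bind_some, actSGE_starSGE_of_eq_some hx, Option.bind_some, hx]

theorem eq_of_actSGE_eq_some_of_mul_self (hmul : MulSpec S mul) {e : SGE S} (he : mul e e = e)
    {x y : Pth V Ed × G} (h : actSGE S e x = some y) : y = x := by
  rcases e with _ | ⟨⟨α, g, β⟩, hs⟩
  · cases h
  have hself : actTriple S α g β (α, g) = some (α, g) := by
    have hmul_self := congrFun (actSGE_mul hmul (some ⟨_, hs⟩) (some ⟨_, hs⟩)) (β, 1)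
    rw [he] at hmul_self
    change actTriple S α g β (β, 1) = (actTriple S α g β (β, 1)).bind (actTriple S α g β)
      at hmul_self
    rwa [actTriple_self hs.2.2, Option.bind_some, eq_comm] at hmul_self
  obtain ⟨rfl, rfl⟩ := eq_and_eq_one_of_actTriple_self hself
  exact actTriple_one_eq_some h

theorem mul_comm_of_mul_self (hmul : MulSpec S mul) {e f : SGE S} (he : mul e e = e)
    (hf : mul f f = f) : mul e f = mul f e := by
  refine actSGE_injective ?_
  rw [actSGE_mul hmul, actSGE_mul hmul]
  exact funext (bind_comm_of_partialIds (fun _ _ => eq_of_actSGE_eq_some_of_mul_self hmul hf)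
    (fun _ _ => eq_of_actSGE_eq_some_of_mul_self hmul he))

end InverseSemigroup

theorem statement1_general {G V Ed : Type} [Group G]
    (S : SelfSimGraph G V Ed) :
    (∃ mul : SGE S → SGE S → SGE S, MulSpec S mul) ∧
    (∀ mul : SGE S → SGE S → SGE S, MulSpec S mul →
      (∀ a b c : SGE S, mul (mul a b) c = mul a (mul b c)) ∧
      (∀ a : SGE S, mul (mul a (starSGE S a)) a = a) ∧
      (∀ a : SGE S, mul (mul (starSGE S a) a) (starSGE S a) = starSGE S a) ∧
      (∀ e f : SGE S, mul e e = e → mul f f = f → mul e f = mul f e)) := by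
  refine ⟨⟨mulDef S, mulDef_spec⟩, fun mul hmul => ⟨mul_assoc_of_mulSpec hmul,
    mul_starSGE_mul_of_mulSpec hmul, fun a => ?_, fun _ _ => mul_comm_of_mul_self hmul⟩⟩
  simpa only [starSGE_starSGE] using mul_starSGE_mul_of_mulSpec hmul (starSGE S a)

/-- `S_{G,E}` is an inverse semigroup with zero: the multiplication is well
defined (there exists a multiplication satisfying all the defining case rules)
and, for any such multiplication, it is associative, every `s` satisfies
`s s* s = s` and `s* s s* = s*`, and idempotents commute. -/
theorem statement1 {G V Ed : Type} [Group G] [Fintype V] [Fintype Ed]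
    (S : SelfSimGraph G V Ed) (hNoSources : ∀ x : V, ∃ e : Ed, S.r e = x) :
    (∃ mul : SGE S → SGE S → SGE S, MulSpec S mul) ∧
    (∀ mul : SGE S → SGE S → SGE S, MulSpec S mul →
      (∀ a b c : SGE S, mul (mul a b) c = mul a (mul b c)) ∧
      (∀ a : SGE S, mul (mul a (starSGE S a)) a = a) ∧
      (∀ a : SGE S, mul (mul (starSGE S a) a) (starSGE S a) = starSGE S a) ∧
      (∀ e f : SGE S, mul e e = e → mul f f = f → mul e f = mul f e)) :=
  statement1_general S
end

section
/- Suppose in addition that E has no sinks. Then E is weakly G-transitive if and only if E is G-transitive. -/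
variable {G V Ed : Type} [Group G]

lemma comp_facts {G V Ed : Type} [Group G] (S : SelfSimGraph G V Ed) :
    ∀ (p q : Pth V Ed), WFP S p → WFP S q → rngP S q = srcP S p →
      WFP S (compP p q) ∧ rngP S (compP p q) = rngP S p ∧
        srcP S (compP p q) = srcP S q := by
  intro p
  induction p with
  | nil x =>
      intro q h1 h2 h3
      exact ⟨h2, by simpa [compP, rngP, srcP] using h3, rfl⟩
  | cons e p ih =>
      intro q h1 h2 h3
      obtain ⟨hw, hr, hs⟩ := ih q h1.2 h2 h3
      refine ⟨⟨?_, hw⟩, rfl, hs⟩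
      show S.d e = rngP S (compP p q)
      rw [hr]; exact h1.1

lemma relPath_trans {G V Ed : Type} [Group G] (S : SelfSimGraph G V Ed)
    {x v u : V} (h1 : RelPath S x v) (h2 : RelPath S v u) : RelPath S x u := by
  obtain ⟨a, hwa, hsa, hra⟩ := h1
  obtain ⟨b, hwb, hsb, hrb⟩ := h2
  obtain ⟨hw, hr, hs⟩ := comp_facts S b a hwb hwa (by rw [hra, hsb])
  exact ⟨compP b a, hw, by rw [hs, hsa], by rw [hr, hrb]⟩

/-- If `E` has no sinks, then `E` is weakly `G`-transitive if and only if `E`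
is `G`-transitive. -/
theorem statement10 {G V Ed : Type} [Group G] [Fintype V] [Fintype Ed]
    (S : SelfSimGraph G V Ed) (hNoSources : ∀ x : V, ∃ e : Ed, S.r e = x)
    (hNoSinks : ∀ x : V, ∃ e : Ed, S.d e = x) :
    (∀ ξ : ℕ → Ed, InfWF S ξ → ∀ x : V,
        ∃ v : V, (v = rngInf S ξ ∨ ∃ i : ℕ, v = S.d (ξ i)) ∧ RelGG S v x) ↔
      (∀ x y : V, RelGG S x y) := by
  constructor
  · intro hw x y
    -- build a backward chain of edges starting at x
    choose f hf using hNoSinks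
    set e : ℕ → Ed := fun n => Nat.rec (f x) (fun _ prev => f (S.r prev)) n with he
    have he0 : S.d (e 0) = x := hf x
    have heS : ∀ n, S.d (e (n + 1)) = S.r (e n) := fun n => hf _
    -- every vertex d(e k) reaches x
    have hreach : ∀ k, RelPath S x (S.d (e k)) := by
      intro k
      induction k with
      | zero => exact ⟨Pth.nil x, trivial, rfl, he0.symm⟩
      | succ k ih =>
          obtain ⟨a, hwa, hsa, hra⟩ := ih
          exact ⟨Pth.cons (e k) a, ⟨hra.symm, hwa⟩, hsa, (heS k).symm⟩
    -- pigeonhole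
    obtain ⟨i, j, hij, hdij⟩ := Finite.exists_ne_map_eq_of_infinite (fun k => S.d (e k))
    wlog hlt : i < j generalizing i j
    · exact this j i hij.symm hdij.symm (by omega)
    have hj1 : 1 ≤ j := by omega
    set p : ℕ := j - i with hp
    have hp0 : 0 < p := by omega
    set ξ : ℕ → Ed := fun n => e (j - 1 - n % p) with hxi
    have hmod : ∀ n : ℕ, n % p < p := fun n => Nat.mod_lt n hp0
    have hwfxi : InfWF S ξ := by
      intro n
      have hmn := hmod n
      by_cases hc : n % p + 1 = p
      · have h1 : (n + 1) % p = 0 := by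
          rcases Nat.eq_or_lt_of_le hp0 with h | h
          · rw [← h] at hc ⊢; simp [Nat.mod_one]
          · rw [Nat.add_mod, Nat.mod_eq_of_lt h, hc, Nat.mod_self]
        have h2 : j - 1 - n % p = i := by omega
        show S.d (e (j - 1 - n % p)) = S.r (e (j - 1 - (n + 1) % p))
        rw [h1, h2]
        have : S.d (e j) = S.r (e (j - 1)) := by
          have := heS (j - 1); rwa [Nat.sub_add_cancel hj1] at this
        simp only [Nat.sub_zero]
        rw [← this]
        exact hdij
      · have h1 : (n + 1) % p = n % p + 1 := by
          have h2 : 1 < p := by omega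
          rw [Nat.add_mod, Nat.mod_eq_of_lt h2, Nat.mod_eq_of_lt (by omega)]
        show S.d (e (j - 1 - n % p)) = S.r (e (j - 1 - (n + 1) % p))
        rw [h1]
        have h2 : j - 1 - n % p = (j - 1 - (n % p + 1)) + 1 := by omega
        rw [h2]
        exact heS _
    obtain ⟨v, hv, u, hvu, hu⟩ := hw ξ hwfxi y
    have hxv : RelPath S x v := by
      rcases hv with hv | ⟨k, hv⟩
      · -- v = rngInf S ξ = r(ξ 0) = r(e (j-1)) = d(e j)
        have : rngInf S ξ = S.d (e j) := by
          show S.r (e (j - 1 - 0 % p)) = S.d (e j)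
          have := heS (j - 1); rw [Nat.sub_add_cancel hj1] at this
          rw [Nat.zero_mod, Nat.sub_zero, ← this]
        rw [hv, this]; exact hreach j
      · rw [hv]; exact hreach _
    exact ⟨u, relPath_trans S hxv hvu, hu⟩
  · intro h ξ hξ x
    exact ⟨rngInf S ξ, Or.inl rfl, h _ x⟩
end
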